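/- arXiv:1108.1671 — 3 statements merged into one kernel-verified Lean document; each statement's English description precedes it below -/
import Mathlib

section
/- Let k ≥ 2 and let G ⊆ R_k. Then Pol(G) contains a near-unanimity function (of some arity ≥ 3) if and only if the set [G] ∩ R̃_k of essential predicates in [G] is finite. -/
/-- Tuples over `E_k = Fin k`. -/
abbrev Tuple (k n : ℕ) := Fin n → Fin k

/-- A predicate on `E_k`: an arity together with a set of tuples of that arity. -/
abbrev Pred (k : ℕ) := Σ n : ℕ, Set (Tuple k n)

/-- The binary equality predicate `σ_k^=`. -/
def eqPred (k : ℕ) : Pred k := ⟨2, {t | t 0 = t 1}⟩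

/-- The 0-ary predicate `false`. -/
def falsePred (k : ℕ) : Pred k := ⟨0, ∅⟩

/-- `[S]`: primitive positive closure of a set of predicates. -/
def ppClosure (k : ℕ) (S : Set (Pred k)) : Set (Pred k) :=
  { ρ | ∃ (l s : ℕ) (σ : Fin s → Pred k)
      (z : (i : Fin s) → Fin (σ i).1 → Fin (ρ.1 + l)),
      (∀ i, σ i ∈ S ∪ {eqPred k, falsePred k}) ∧
      ∀ x : Tuple k ρ.1, x ∈ ρ.2 ↔
        ∃ y : Tuple k l, ∀ i, (fun j => Fin.append x y (z i j)) ∈ (σ i).2 }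

/-- `AND(S)`: quantifier-free conjunctions of predicates of `S`, with no
repeated variable inside a single conjunct. -/
def andClosure (k : ℕ) (S : Set (Pred k)) : Set (Pred k) :=
  { ρ | ∃ (s : ℕ) (σ : Fin s → Pred k)
      (z : (i : Fin s) → Fin (σ i).1 → Fin ρ.1),
      (∀ i, σ i ∈ S) ∧ (∀ i, Function.Injective (z i)) ∧
      ∀ x : Tuple k ρ.1, x ∈ ρ.2 ↔ ∀ i, (fun j => x (z i j)) ∈ (σ i).2 }

/-- An essential predicate: not a conjunction of predicates of smaller arity. -/
def Essential (k : ℕ) (ρ : Pred k) : Prop :=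
  ρ ∉ andClosure k { σ : Pred k | σ.1 < ρ.1 }

/-- `f` preserves the predicate `ρ`. -/
def Preserves {k m : ℕ} (f : Tuple k m → Fin k) (ρ : Pred k) : Prop :=
  ∀ α : Fin m → Tuple k ρ.1, (∀ i, α i ∈ ρ.2) →
    (fun j => f fun i => α i j) ∈ ρ.2

/-- `f` is a near-unanimity function. -/
def IsNUF {k n : ℕ} (f : Tuple k n → Fin k) : Prop :=
  ∀ x y : Fin k, ∀ i : Fin n, f (Function.update (fun _ => y) i x) = y

/-- `Pol(G)` contains a near-unanimity function of arity `n`. -/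
def HasNUF (k : ℕ) (G : Set (Pred k)) (n : ℕ) : Prop :=
  ∃ f : Tuple k n → Fin k, IsNUF f ∧ ∀ ρ ∈ G, Preserves f ρ

/-- `SR_k`: the unary singleton predicates `ρ_{=,a}`. -/
def SR (k : ℕ) : Set (Pred k) := { ρ | ∃ a : Fin k, ρ = ⟨1, {t | t 0 = a}⟩ }

/-- The unary predicate `(x ∈ C)`. -/
def memPred (k : ℕ) (C : Set (Fin k)) : Pred k := ⟨1, { t | t 0 ∈ C }⟩

/-- `Strike(ρ)`: predicates obtained from `ρ` by existentially quantifying some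
coordinates and injectively renaming the rest. -/
def strike (k : ℕ) (ρ : Pred k) : Set (Pred k) :=
  { ρ' | ∃ (l : ℕ) (z : Fin ρ.1 → Fin (ρ'.1 + l)),
      Function.Injective z ∧
      ∀ x : Tuple k ρ'.1, x ∈ ρ'.2 ↔
        ∃ y : Tuple k l, (fun j => Fin.append x y (z j)) ∈ ρ.2 }

/-- The tuple `(d, e, α)`. -/
def pre2 {k m : ℕ} (d e : Fin k) (α : Tuple k m) : Tuple k (m + 2) :=
  Fin.cons d (Fin.cons e α)

/-- The `(m+2)`-ary chain predicate
`ρ(x_1,…,x_n) = ∃y_1…y_{n-1}, fst(x_1,y_1) ∧ ⋀ mid_i(y_i,x_{i+1},y_{i+1}) ∧ lst(y_{n-1},x_n)`. -/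
def chainPred (k m : ℕ) (fst lst : Set (Tuple k 2))
    (mid : Fin m → Set (Tuple k 3)) : Pred k :=
  ⟨m + 2, { x | ∃ y : Tuple k (m + 1),
      ![x 0, y 0] ∈ fst ∧
      (∀ i : Fin m, ![y i.castSucc, x i.succ.castSucc, y i.succ] ∈ mid i) ∧
      ![y (Fin.last m), x (Fin.last (m + 1))] ∈ lst }⟩

/-!
If an `n`-ary near-unanimity function `f` preserves `G`, it preserves every `ρ ∈ [G]`, and the
Baker–Pixley argument applies: when `ρ` has arity at least `n`, a tuple all of whose projections
deleting one of the first `n` coordinates extend to tuples `β₁, …, βₙ ∈ ρ` is itself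
`f(β₁, …, βₙ) ∈ ρ`. So `ρ` is the conjunction of these projections, and every essential predicate
of `[G]` has arity `< n`; there are finitely many predicates of bounded arity.

Conversely, if every essential predicate of `[G]` has arity `< n`, then by induction on the
arity every `ρ ∈ [G]` contains each tuple whose projections to fewer than `n` coordinates all
extend to tuples of `ρ`. Apply this to the projection, onto the near-unanimous inputs, of the
`k^n`-ary predicate of all `n`-ary polymorphisms of `G` (which is in `[G]`), and to the tuple
sending each near-unanimous input to its majority value: fewer than `n` such inputs share a
coordinate at which they all take their majority value, so the corresponding projection is a
witness. The resulting polymorphism is a near-unanimity function.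
-/

theorem finite_setOf_arity_lt (k n : ℕ) : {ρ : Pred k | ρ.1 < n}.Finite :=
  ((Set.finite_Iio n).biUnion fun m _ => Set.finite_range (Sigma.mk m)).subset
    fun ρ hρ => Set.mem_biUnion hρ ⟨ρ.2, rfl⟩

section Preserves

variable {k n : ℕ} {f : Tuple k n → Fin k}

theorem apply_fin_append {m l : ℕ} (f : Tuple k n → Fin k) (x : Fin n → Tuple k m)
    (y : Fin n → Tuple k l) (p : Fin (m + l)) :
    f (fun i => Fin.append (x i) (y i) p) =
      Fin.append (fun a => f fun i => x i a) (fun b => f fun i => y i b) p := by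
  induction p using Fin.addCases <;> simp

theorem preserves_eqPred (f : Tuple k n → Fin k) : Preserves f (eqPred k) :=
  fun _ hα => congrArg f (funext hα)

theorem preserves_falsePred (hn : n ≠ 0) (f : Tuple k n → Fin k) : Preserves f (falsePred k) :=
  fun _ hα => absurd (hα ⟨0, Nat.pos_of_ne_zero hn⟩) id

theorem preserves_of_mem_ppClosure (hn : n ≠ 0) {G : Set (Pred k)}
    (hf : ∀ ρ ∈ G, Preserves f ρ) {ρ : Pred k} (hρ : ρ ∈ ppClosure k G) : Preserves f ρ := by
  obtain ⟨l, s, σ, z, hσ, hρ⟩ := hρ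
  have hfσ : ∀ i, Preserves f (σ i) := by
    intro i
    rcases hσ i with hσi | hσi | hσi
    · exact hf _ hσi
    · exact hσi ▸ preserves_eqPred f
    · exact hσi ▸ preserves_falsePred hn f
  intro α hα
  choose y hy using fun i => (hρ (α i)).1 (hα i)
  refine (hρ _).2 ⟨fun b => f fun i => y i b, fun c => ?_⟩
  simpa only [apply_fin_append] using hfσ c _ fun i => hy i c

end Preserves

section BakerPixley

variable {k n : ℕ} {f : Tuple k n → Fin k}

theorem IsNUF.apply_const (hf : IsNUF f) (hn : n ≠ 0) (y : Fin k) : f (fun _ => y) = y := by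
  simpa using hf y y ⟨0, Nat.pos_of_ne_zero hn⟩

theorem IsNUF.mem_of_preserves (hf : IsNUF f) (hn : n ≠ 0) {m : ℕ} {P : Set (Tuple k m)}
    (hfP : Preserves f ⟨m, P⟩) {e : Fin n → Fin m} (he : e.Injective) (x : Tuple k m)
    (hx : ∀ i, ∃ β ∈ P, ∀ j ≠ e i, β j = x j) : x ∈ P := by
  choose β hβP hβx using hx
  convert hfP β hβP using 1
  funext j
  by_cases hj : j ∈ Set.range e
  · obtain ⟨i₀, rfl⟩ := hj
    have hcol : (fun i => β i (e i₀)) = Function.update (fun _ => x (e i₀)) i₀ (β i₀ (e i₀)) := by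
      funext i
      rcases eq_or_ne i i₀ with rfl | hi
      · simp
      · rw [Function.update_of_ne hi]
        exact hβx i _ (he.ne hi).symm
    rw [hcol, hf]
  · have hcol : (fun i => β i j) = fun _ => x j :=
      funext fun i => hβx i j fun h => hj ⟨i, h.symm⟩
    rw [hcol, hf.apply_const hn]

theorem IsNUF.arity_lt_of_essential (hf : IsNUF f) (hn : n ≠ 0) {ρ : Pred k}
    (hfρ : Preserves f ρ) (hρ : Essential k ρ) : ρ.1 < n := by
  obtain ⟨_ | m, P⟩ := ρ
  · exact Nat.pos_of_ne_zero hn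
  by_contra! hnm
  let e : Fin n → Fin (m + 1) := Fin.castLE hnm
  refine hρ ⟨n, fun i => ⟨m, (· ∘ (e i).succAbove) '' P⟩, fun i => (e i).succAbove,
    fun _ => Nat.lt_succ_self m, fun _ => Fin.succAbove_right_injective,
    fun x => ⟨fun hx _ => ⟨x, hx, rfl⟩, fun hx => ?_⟩⟩
  refine hf.mem_of_preserves hn hfρ (Fin.castLE_injective hnm) x fun i => ?_
  obtain ⟨β, hβ, hβx⟩ := hx i
  refine ⟨β, hβ, fun j hj => ?_⟩
  obtain ⟨j', rfl⟩ := Fin.exists_succAbove_eq hj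
  exact congrFun hβx j'

end BakerPixley

section PPClosure

variable {k : ℕ} {G : Set (Pred k)}

theorem image_comp_mem_ppClosure {m r : ℕ} {P : Set (Tuple k m)}
    (hP : (⟨m, P⟩ : Pred k) ∈ ppClosure k G) (S : Fin r → Fin m) :
    (⟨r, (· ∘ S) '' P⟩ : Pred k) ∈ ppClosure k G := by
  obtain ⟨l, s, σ, z, hσ, hP⟩ := hP
  -- free variables `t`, then the old variables `w`; conjuncts `t j = w (S j)`, then the old ones
  let c : Fin (r + s) → Σ p : Pred k, Fin p.1 → Fin (r + (m + l)) :=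
    Fin.append (fun j => ⟨eqPred k, ![Fin.castAdd _ j, Fin.natAdd r (Fin.castAdd l (S j))]⟩)
      fun i => ⟨σ i, Fin.natAdd r ∘ z i⟩
  have hc (t : Tuple k r) (w : Tuple k (m + l)) :
      (∀ i, (fun j => Fin.append t w ((c i).2 j)) ∈ (c i).1.2) ↔
        (∀ j, t j = w (Fin.castAdd l (S j))) ∧ ∀ i, (fun j => w (z i j)) ∈ (σ i).2 := by
    rw [Fin.forall_fin_add]
    refine and_congr (forall_congr' fun j => ?_) (forall_congr' fun i => ?_)
    · rw [show c (Fin.castAdd s j) = _ from Fin.append_left _ _ j]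
      change Fin.append t w (Fin.castAdd _ j) = Fin.append t w (Fin.natAdd r _) ↔ _
      simp
    · rw [show c (Fin.natAdd r i) = _ from Fin.append_right _ _ i]
      simp
  refine ⟨m + l, r + s, fun i => (c i).1, fun i => (c i).2, ?_, fun t => ?_⟩
  · simpa [Fin.forall_fin_add, c] using hσ
  simp only [hc]
  constructor
  · rintro ⟨β, hβ, rfl⟩
    obtain ⟨y, hy⟩ := (hP β).1 hβ
    exact ⟨Fin.append β y, fun j => by simp, by simpa using hy⟩
  · rintro ⟨w, ht, hw⟩
    refine ⟨fun v => w (Fin.castAdd l v), (hP _).2 ⟨fun v => w (Fin.natAdd m v), ?_⟩,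
      funext fun j => (ht j).symm⟩
    simpa [Fin.append_castAdd_natAdd] using hw

theorem mem_ppClosure_of_forall_comp_mem {ι : Type*} {N : ℕ} (σ : ι → Pred k)
    (hσ : ∀ i, σ i ∈ G) (z : ∀ i, Fin (σ i).1 → Fin N) :
    (⟨N, {x | ∀ i, x ∘ z i ∈ (σ i).2}⟩ : Pred k) ∈ ppClosure k G := by
  let A (i : ι) : Set (Tuple k N) := {x | x ∘ z i ∈ (σ i).2}
  -- `A` takes finitely many values, so finitely many of the constraints suffice
  obtain ⟨s, a, ha⟩ := (Set.toFinite (Set.range A)).fin_embedding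
  have hw (t : Fin s) : ∃ i, A i = a t := by
    rw [← Set.mem_range, ← ha]
    exact Set.mem_range_self t
  choose w hw using hw
  have hA (x : Tuple k N) : (∀ i, x ∈ A i) ↔ ∀ t, x ∈ A (w t) := by
    refine ⟨fun h t => h _, fun h i => ?_⟩
    obtain ⟨t, ht⟩ : A i ∈ Set.range a := ha ▸ Set.mem_range_self i
    rw [← ht, ← hw t]
    exact h t
  refine ⟨0, s, σ ∘ w, fun t j => Fin.castAdd 0 (z (w t) j), fun t => Or.inl (hσ _),
    fun x => ?_⟩
  simp only [Fin.append_left, exists_const]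
  exact hA x

theorem setOf_preserves_mem_ppClosure {n N : ℕ} (e : Tuple k n ≃ Fin N) :
    (⟨N, {g | ∀ ρ ∈ G, Preserves (g ∘ e) ρ}⟩ : Pred k) ∈ ppClosure k G := by
  let ι := {p : Σ ρ : Pred k, Fin n → Tuple k ρ.1 // p.1 ∈ G ∧ ∀ i, p.2 i ∈ p.1.2}
  convert mem_ppClosure_of_forall_comp_mem (G := G) (fun p : ι => p.1.1) (fun p => p.2.1)
    fun p j => e fun i => p.1.2 i j using 3
  ext g
  exact ⟨fun h p => h _ p.2.1 _ p.2.2, fun h ρ hρ α hα => h ⟨⟨ρ, α⟩, hρ, hα⟩⟩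

end PPClosure

section Decomposition

variable {k n : ℕ} {G : Set (Pred k)}

theorem mem_of_forall_comp_mem_image
    (hbound : ∀ ρ ∈ ppClosure k G, Essential k ρ → ρ.1 < n) {m : ℕ} {P : Set (Tuple k m)}
    (hP : (⟨m, P⟩ : Pred k) ∈ ppClosure k G) (x : Tuple k m)
    (hx : ∀ r < n, ∀ S : Fin r → Fin m, x ∘ S ∈ (· ∘ S) '' P) : x ∈ P := by
  induction m using Nat.strong_induction_on with
  | _ m IH =>
  by_cases hm : m < n
  · obtain ⟨β, hβ, hβx⟩ := hx m hm id
    exact (show β = x from hβx) ▸ hβ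
  obtain ⟨s, σ, z, hσ, -, hPσ⟩ := not_not.1 fun hess => hm (hbound _ hP hess)
  refine (hPσ x).2 fun i => ?_
  obtain ⟨β, hβ, hβx⟩ : x ∘ z i ∈ (· ∘ z i) '' P := by
    refine IH _ (hσ i) (image_comp_mem_ppClosure hP (z i)) _ fun r hr T => ?_
    obtain ⟨β, hβ, hβx⟩ := hx r hr (z i ∘ T)
    exact ⟨β ∘ z i, ⟨β, hβ, rfl⟩, hβx⟩
  change x ∘ z i ∈ (σ i).2
  rw [← hβx]
  exact (hPσ β).1 hβ i

theorem hasNUF_of_essential_arity_lt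
    (hbound : ∀ ρ ∈ ppClosure k G, Essential k ρ → ρ.1 < n) : HasNUF k G n := by
  let e := Fintype.equivFin (Tuple k n)
  let Γ : Set (Tuple k (Fintype.card (Tuple k n))) := {g | ∀ ρ ∈ G, Preserves (g ∘ e) ρ}
  -- `c` enumerates the near-unanimous inputs `update (fun _ => y) i x` as triples `(y, i, x)`
  let c := (Fintype.equivFin (Fin k × Fin n × Fin k)).symm
  let S (t : Fin _) : Fin (Fintype.card (Tuple k n)) :=
    e (Function.update (fun _ => (c t).1) (c t).2.1 (c t).2.2)
  obtain ⟨g, hg, hgS⟩ : (fun t => (c t).1) ∈ (· ∘ S) '' Γ := by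
    refine mem_of_forall_comp_mem_image hbound
      (image_comp_mem_ppClosure (setOf_preserves_mem_ppClosure e) S) _ fun r hr T => ?_
    obtain ⟨i, hi⟩ : ∃ i, i ∉ Set.range fun j => (c (T j)).2.1 := by
      by_contra! h
      exact absurd (Fintype.card_le_of_surjective _ h) (by simpa using hr)
    refine ⟨_, ⟨fun v => e.symm v i, fun _ _ _ hα => by simpa using hα i, rfl⟩, funext fun j => ?_⟩
    simp [S, Function.update_of_ne fun h => hi ⟨j, h.symm⟩]
  refine ⟨g ∘ e, fun x y i => ?_, hg⟩
  simpa [S] using congrFun hgS (c.symm (y, i, x))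

end Decomposition

theorem nuf_iff_essential_finite_general (k : ℕ) (G : Set (Pred k)) :
    (∃ n, 3 ≤ n ∧ HasNUF k G n) ↔
      { ρ ∈ ppClosure k G | Essential k ρ }.Finite := by
  constructor
  · rintro ⟨n, hn, f, hf, hfG⟩
    refine (finite_setOf_arity_lt k n).subset fun ρ ⟨hρ, hess⟩ => ?_
    exact hf.arity_lt_of_essential (by omega) (preserves_of_mem_ppClosure (by omega) hfG hρ) hess
  · intro hfin
    obtain ⟨N, hN⟩ := (hfin.image Sigma.fst).bddAbove
    refine ⟨N + 3, by omega, hasNUF_of_essential_arity_lt fun ρ hρ hess => ?_⟩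
    exact Nat.lt_of_le_of_lt (hN ⟨ρ, ⟨hρ, hess⟩, rfl⟩) (by omega)

theorem nuf_iff_essential_finite (k : ℕ) (hk : 2 ≤ k) (G : Set (Pred k)) :
    (∃ n, 3 ≤ n ∧ HasNUF k G n) ↔
      { ρ ∈ ppClosure k G | Essential k ρ }.Finite :=
  nuf_iff_essential_finite_general k G
end

section
/- Let k ≥ 2. For every set S ⊆ R_k one has [[S] ∩ R̃_k] = [S]; that is, every primitive-positively closed set of predicates is generated by its essential predicates. -/
/-!
If `ρ ∈ [S]` is not essential, it is a conjunction of predicates of smaller arity. Replacing each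
conjunct by the projection of `ρ` onto the variables of that conjunct gives the same conjunction,
and these projections are pp-definable from `ρ`, hence lie in `[S]`. By induction on the arity
every predicate of `[S]` is thus a conjunction of members of `[T]`, where `T` is the set of
essential predicates of `[S]`, and `[T]` is closed under conjunction because `[·]` is idempotent.
-/

abbrev Atom (k : ℕ) (V : Type) := Σ σ : Pred k, Fin σ.1 → V

/-- `ppClosure` with bound variables and atoms indexed by arbitrary finite types rather than by
`Fin l` and `Fin s`, so that substituting formulas into formulas needs no index arithmetic. -/
def PPDefinable (k : ℕ) (S : Set (Pred k)) (n : ℕ) (P : Set (Tuple k n)) : Prop :=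
  ∃ (ι J : Type) (_ : Finite ι) (_ : Finite J) (φ : J → Atom k (Fin n ⊕ ι)),
    (∀ j, (φ j).1 ∈ S ∪ {eqPred k, falsePred k}) ∧
    ∀ x : Tuple k n, x ∈ P ↔ ∃ y : ι → Fin k, ∀ j, Sum.elim x y ∘ (φ j).2 ∈ (φ j).1.2

section ppClosure

variable {k : ℕ} {S T : Set (Pred k)}

theorem Fin.append_eq_sumElim_comp {α : Type*} {m n : ℕ} (x : Fin m → α) (y : Fin n → α) :
    Fin.append x y = Sum.elim x y ∘ finSumFinEquiv.symm := by
  rw [← Fin.append_comp_sumElim]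
  ext i
  exact congrArg _ (finSumFinEquiv.apply_symm_apply i).symm

theorem mem_ppClosure_iff {ρ : Pred k} : ρ ∈ ppClosure k S ↔ PPDefinable k S ρ.1 ρ.2 := by
  constructor
  · rintro ⟨l, s, σ, z, hσ, hρ⟩
    refine ⟨Fin l, Fin s, inferInstance, inferInstance, fun i => ⟨σ i, finSumFinEquiv.symm ∘ z i⟩,
      hσ, fun x => ?_⟩
    simp only [hρ x, Fin.append_eq_sumElim_comp]
    rfl
  · rintro ⟨ι, J, _, _, φ, hφ, hρ⟩
    obtain ⟨l, ⟨e⟩⟩ := Finite.exists_equiv_fin ι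
    obtain ⟨s, ⟨f⟩⟩ := Finite.exists_equiv_fin J
    refine ⟨l, s, fun i => (φ (f.symm i)).1,
      fun i => finSumFinEquiv ∘ Sum.map id e ∘ (φ (f.symm i)).2, fun i => hφ _, fun x => ?_⟩
    have hcomp : ∀ (y : Fin l → Fin k) (v : Fin ρ.1 ⊕ ι),
        Fin.append x y (finSumFinEquiv (Sum.map id e v)) = Sum.elim x (y ∘ e) v := by
      rintro y (a | b) <;> simp
    rw [hρ x]
    constructor
    · rintro ⟨y, hy⟩
      refine ⟨y ∘ e.symm, fun i => ?_⟩
      simpa [hcomp, Function.comp_def] using hy (f.symm i)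
    · rintro ⟨y, hy⟩
      refine ⟨y ∘ e, fun j => ?_⟩
      obtain ⟨i, rfl⟩ := f.symm.surjective j
      simpa [hcomp, Function.comp_def] using hy i

theorem mem_ppClosure_of_mem_union {σ : Pred k} (hσ : σ ∈ S ∪ {eqPred k, falsePred k}) :
    σ ∈ ppClosure k S :=
  mem_ppClosure_iff.2 ⟨Empty, Unit, inferInstance, inferInstance, fun _ => ⟨σ, Sum.inl⟩,
    fun _ => hσ, fun _ => ⟨fun hx => ⟨isEmptyElim, fun _ => hx⟩, fun ⟨_, hx⟩ => hx ()⟩⟩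

theorem subset_ppClosure : S ⊆ ppClosure k S :=
  fun _ hσ => mem_ppClosure_of_mem_union (Or.inl hσ)

theorem ppClosure_mono (h : S ⊆ T) : ppClosure k S ⊆ ppClosure k T := by
  rintro ρ ⟨l, s, σ, z, hσ, hρ⟩
  exact ⟨l, s, σ, z, fun i => Set.union_subset_union_left _ h (hσ i), hρ⟩

/-- Substituting, for every atom, a pp-definition of its predicate; the bound variables of the
substituted definitions are kept apart by indexing them with the atom. -/
theorem PPDefinable.of_ppClosure {n : ℕ} {P : Set (Tuple k n)}
    (h : PPDefinable k (ppClosure k S) n P) : PPDefinable k S n P := by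
  obtain ⟨ι, J, _, _, φ, hφ, hP⟩ := h
  have hdef : ∀ j, PPDefinable k S (φ j).1.1 (φ j).1.2 := fun j =>
    mem_ppClosure_iff.1 ((hφ j).elim id (fun h => mem_ppClosure_of_mem_union (Or.inr h)))
  choose ι' J' _ _ ψ hψ hσ using hdef
  let subst (j : J) : Fin (φ j).1.1 ⊕ ι' j → Fin n ⊕ (ι ⊕ Σ j, ι' j) :=
    Sum.elim (Sum.map id Sum.inl ∘ (φ j).2) fun b => .inr (.inr ⟨j, b⟩)
  have hsubst : ∀ (x : Tuple k n) (Y : ι ⊕ (Σ j, ι' j) → Fin k) j, Sum.elim x Y ∘ subst j =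
      Sum.elim (Sum.elim x (Y ∘ Sum.inl) ∘ (φ j).2) fun b => Y (.inr ⟨j, b⟩) := by
    intro x Y j
    ext (a | b)
    · simp only [subst, Function.comp_apply, Sum.elim_inl]
      rcases (φ j).2 a with c | c <;> rfl
    · rfl
  refine ⟨ι ⊕ Σ j, ι' j, Σ j, J' j, inferInstance, inferInstance,
    fun p => ⟨(ψ p.1 p.2).1, subst p.1 ∘ (ψ p.1 p.2).2⟩, fun p => hψ p.1 p.2, fun x => ?_⟩
  rw [hP x]
  constructor
  · rintro ⟨y, hy⟩
    choose v hv using fun j => (hσ j _).1 (hy j)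
    refine ⟨Sum.elim y fun p => v p.1 p.2, fun ⟨j, t⟩ => ?_⟩
    rw [← Function.comp_assoc, hsubst]
    exact hv j t
  · rintro ⟨Y, hY⟩
    refine ⟨Y ∘ Sum.inl, fun j => (hσ j _).2 ⟨fun b => Y (.inr ⟨j, b⟩), fun t => ?_⟩⟩
    rw [← hsubst]
    exact hY ⟨j, t⟩

theorem ppClosure_ppClosure (S : Set (Pred k)) : ppClosure k (ppClosure k S) = ppClosure k S :=
  subset_antisymm (fun _ hρ => mem_ppClosure_iff.2 (mem_ppClosure_iff.1 hρ).of_ppClosure)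
    subset_ppClosure

theorem andClosure_mono (h : S ⊆ T) : andClosure k S ⊆ andClosure k T := by
  rintro ρ ⟨s, σ, z, hσ, hz, hρ⟩
  exact ⟨s, σ, z, fun i => h (hσ i), hz, hρ⟩

theorem andClosure_subset_ppClosure : andClosure k S ⊆ ppClosure k S := by
  rintro ρ ⟨s, σ, z, hσ, -, hρ⟩
  refine mem_ppClosure_iff.2 ⟨Empty, Fin s, inferInstance, inferInstance,
    fun i => ⟨σ i, Sum.inl ∘ z i⟩, fun i => Or.inl (hσ i), fun x => ?_⟩
  rw [hρ x]
  exact ⟨fun hx => ⟨isEmptyElim, hx⟩, fun ⟨_, hx⟩ => hx⟩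

def projPred (ρ : Pred k) {m : ℕ} (z : Fin m → Fin ρ.1) : Pred k :=
  ⟨m, {u | ∃ w ∈ ρ.2, w ∘ z = u}⟩

/-- `∃ w, ρ(w) ∧ ⋀ᵢ xᵢ = w_{z i}`. -/
theorem projPred_mem_ppClosure_singleton (ρ : Pred k) {m : ℕ} (z : Fin m → Fin ρ.1) :
    projPred ρ z ∈ ppClosure k {ρ} := by
  refine mem_ppClosure_iff.2 ⟨Fin ρ.1, Option (Fin m), inferInstance, inferInstance,
    fun o => o.elim ⟨ρ, Sum.inr⟩ fun i => ⟨eqPred k, ![Sum.inl i, Sum.inr (z i)]⟩,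
    fun o => ?_, fun (x : Fin m → Fin k) => ?_⟩
  · cases o
    exacts [Or.inl rfl, Or.inr (Or.inl rfl)]
  · simp only [Option.forall]
    show (∃ w ∈ ρ.2, w ∘ z = x) ↔ ∃ w : Tuple k ρ.1, w ∈ ρ.2 ∧ ∀ i, x i = w (z i)
    exact exists_congr fun w =>
      and_congr_right fun _ => funext_iff.trans (forall_congr' fun _ => eq_comm)

theorem projPred_mem_ppClosure {ρ : Pred k} (hρ : ρ ∈ ppClosure k S) {m : ℕ}
    (z : Fin m → Fin ρ.1) : projPred ρ z ∈ ppClosure k S := by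
  rw [← ppClosure_ppClosure S]
  exact ppClosure_mono (Set.singleton_subset_iff.2 hρ) (projPred_mem_ppClosure_singleton ρ z)

theorem mem_andClosure_projPred {ρ : Pred k} (hρ : ρ ∈ andClosure k S) :
    ρ ∈ andClosure k {π | ∃ σ ∈ S, ∃ z : Fin σ.1 → Fin ρ.1, π = projPred ρ z} := by
  obtain ⟨s, σ, z, hσ, hz, hρ⟩ := hρ
  refine ⟨s, fun i => projPred ρ (z i), z, fun i => ⟨σ i, hσ i, z i, rfl⟩, hz, fun x => ?_⟩
  refine ⟨fun hx i => ⟨x, hx, rfl⟩, fun hx => (hρ x).2 fun i => ?_⟩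
  obtain ⟨w, hw, hwx⟩ := hx i
  exact hwx ▸ (hρ w).1 hw i

theorem mem_ppClosure_essential {ρ : Pred k} (hρ : ρ ∈ ppClosure k S) :
    ρ ∈ ppClosure k {ρ ∈ ppClosure k S | Essential k ρ} := by
  by_cases hess : Essential k ρ
  · exact subset_ppClosure ⟨hρ, hess⟩
  have hproj : {π | ∃ σ ∈ {σ : Pred k | σ.1 < ρ.1}, ∃ z : Fin σ.1 → Fin ρ.1, π = projPred ρ z} ⊆
      ppClosure k {ρ ∈ ppClosure k S | Essential k ρ} := by
    rintro _ ⟨σ, hσ, z, rfl⟩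
    exact mem_ppClosure_essential (projPred_mem_ppClosure hρ z)
  rw [← ppClosure_ppClosure]
  exact andClosure_subset_ppClosure <|
    andClosure_mono hproj (mem_andClosure_projPred (not_not.1 hess))
termination_by ρ.1
decreasing_by exact hσ

end ppClosure

theorem ppClosure_essential_general (k : ℕ) (S : Set (Pred k)) :
    ppClosure k { ρ ∈ ppClosure k S | Essential k ρ } = ppClosure k S :=
  subset_antisymm ((ppClosure_mono fun _ hρ => hρ.1).trans (ppClosure_ppClosure S).subset)
    fun _ => mem_ppClosure_essential

theorem ppClosure_essential (k : ℕ) (hk : 2 ≤ k) (S : Set (Pred k)) :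
    ppClosure k { ρ ∈ ppClosure k S | Essential k ρ } = ppClosure k S :=
  ppClosure_essential_general k S
end

section
/- Let k ≥ 2, let G ⊆ R_k, and let M = {α_1,…,α_n} ⊆ E_k^h. Then the h-ary predicate ρ_{M,G} = { f(α_1,…,α_n) : f ∈ Pol(G) of arity n } belongs to [G]. -/
/-!
Give the formula one bound variable `y_β` for every `β ∈ E_k^n`, so that an assignment of the
bound variables is an `n`-ary function `y`. The conjuncts `x_j = y_{(α_1 j, …, α_n j)}` say that
`x` is the image of the columns of `M` under `y`. Each of the finitely many `n`-ary functions
`f ∉ Pol(G)` fails to preserve some `ρ ∈ G` on some tuples `β_1, …, β_n ∈ ρ`, and the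
conjunct `ρ((y_{(β_1 j, …, β_n j)})_j)` holds for every polymorphism `y` but not for `y = f`.
-/

theorem mem_ppClosure_of_iff {k : ℕ} {S : Set (Pred k)} (ρ : Pred k)
    {ι J : Type*} [Fintype ι] [Fintype J] (σ : J → Pred k)
    (z : (c : J) → Fin (σ c).1 → Fin ρ.1 ⊕ ι)
    (hσ : ∀ c, σ c ∈ S ∪ {eqPred k, falsePred k})
    (hρ : ∀ x, x ∈ ρ.2 ↔ ∃ y : ι → Fin k, ∀ c, (fun j => Sum.elim x y (z c j)) ∈ (σ c).2) :
    ρ ∈ ppClosure k S := by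
  let eι := Fintype.equivFin ι
  let eJ := (Fintype.equivFin J).symm
  refine ⟨Fintype.card ι, Fintype.card J, σ ∘ eJ,
    fun c j => finSumFinEquiv (Sum.map id eι (z (eJ c) j)), fun c => hσ _, fun x => ?_⟩
  have happend : ∀ (y : Fin (Fintype.card ι) → Fin k) (v : Fin ρ.1 ⊕ ι),
      Fin.append x y (finSumFinEquiv (Sum.map id eι v)) = Sum.elim x (y ∘ eι) v := by
    rintro y (a | b) <;> simp
  simp only [happend, Function.comp_apply, hρ]
  constructor
  · rintro ⟨y, hy⟩
    exact ⟨y ∘ eι.symm, fun c => by simpa [Function.comp_assoc] using hy (eJ c)⟩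
  · rintro ⟨y, hy⟩
    refine ⟨y ∘ eι, fun c => ?_⟩
    obtain ⟨c, rfl⟩ := eJ.surjective c
    exact hy c

theorem rho_MG_mem_ppClosure_general (k h n : ℕ) (G : Set (Pred k))
    (α : Fin n → Tuple k h) :
    (⟨h, { t | ∃ f : Tuple k n → Fin k,
        (∀ ρ ∈ G, Preserves f ρ) ∧ t = fun j => f fun i => α i j }⟩ : Pred k)
      ∈ ppClosure k G := by
  classical
  let Bad := {f : Tuple k n → Fin k // ¬ ∀ ρ ∈ G, Preserves f ρ}
  have hwitness : ∀ f : Bad, ∃ ρ ∈ G, ∃ β : Fin n → Tuple k ρ.1,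
      (∀ i, β i ∈ ρ.2) ∧ (fun j => f.1 fun i => β i j) ∉ ρ.2 := by
    rintro ⟨f, hf⟩
    simpa [Preserves] using hf
  choose ρ hρG β hβ hfβ using hwitness
  refine mem_ppClosure_of_iff _ (Sum.elim (fun _ : Fin h => eqPred k) ρ)
    (fun c => match c with
      | .inl j => ![.inl j, .inr fun i => α i j]
      | .inr f => fun j => .inr fun i => β f i j)
    (by rintro (j | f) <;> simp [hρG]) (fun x => ?_)
  simp only [Sum.forall, Sum.elim_inl, Sum.elim_inr, eqPred, Set.mem_ofPred_eq]
  constructor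
  · rintro ⟨f, hf, rfl⟩
    exact ⟨f, fun _ => rfl, fun g => hf _ (hρG g) _ (hβ g)⟩
  · rintro ⟨y, hxy, hy⟩
    have hy_pol : ∀ ρ ∈ G, Preserves y ρ := by
      by_contra hbad
      exact hfβ ⟨y, hbad⟩ (hy ⟨y, hbad⟩)
    exact ⟨y, hy_pol, funext hxy⟩

theorem rho_MG_mem_ppClosure (k h n : ℕ) (hk : 2 ≤ k) (G : Set (Pred k))
    (α : Fin n → Tuple k h) :
    (⟨h, { t | ∃ f : Tuple k n → Fin k,
        (∀ ρ ∈ G, Preserves f ρ) ∧ t = fun j => f fun i => α i j }⟩ : Pred k)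
      ∈ ppClosure k G :=
  rho_MG_mem_ppClosure_general k h n G α
end
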